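/- The TILES state ρ^upb = (1/4)(I_9 − Σ_{i=0}^4 |ψ_i⟩⟨ψ_i|) is PPT: its partial transpose (1⊗T)ρ^upb is positive semidefinite. -/
import Mathlib


open Matrix
open scoped ComplexOrder

/-- Partial transpose on the second factor of `ℂ^3 ⊗ ℂ^3`, in the standard basis. -/
def partialTranspose (ρ : Matrix (Fin 3 × Fin 3) (Fin 3 × Fin 3) ℂ) :
    Matrix (Fin 3 × Fin 3) (Fin 3 × Fin 3) ℂ :=
  Matrix.of fun p q => ρ (p.1, q.2) (q.1, p.2)

/-- Standard basis vectors of `ℂ^3`. -/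
noncomputable def e (i : Fin 3) : Fin 3 → ℂ := Pi.single i 1

/-- Tensor product of vectors in `ℂ^3`. -/
noncomputable def tp (u v : Fin 3 → ℂ) : Fin 3 × Fin 3 → ℂ := fun p => u p.1 * v p.2

/-- The five TILES unextendible-product-basis vectors in `ℂ^3 ⊗ ℂ^3`. -/
noncomputable def tiles : Fin 5 → (Fin 3 × Fin 3 → ℂ)
  | 0 => ((Real.sqrt 2 : ℂ))⁻¹ • tp (e 0) (e 0 - e 1)
  | 1 => ((Real.sqrt 2 : ℂ))⁻¹ • tp (e 0 - e 1) (e 2)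
  | 2 => ((Real.sqrt 2 : ℂ))⁻¹ • tp (e 2) (e 1 - e 2)
  | 3 => ((Real.sqrt 2 : ℂ))⁻¹ • tp (e 1 - e 2) (e 0)
  | 4 => (3 : ℂ)⁻¹ • tp (e 0 + e 1 + e 2) (e 0 + e 1 + e 2)

/-- The TILES bound entangled state `ρ^upb = (1/4)(I₉ − Σᵢ |ψᵢ⟩⟨ψᵢ|)`. -/
noncomputable def rhoUpb : Matrix (Fin 3 × Fin 3) (Fin 3 × Fin 3) ℂ :=
  (4 : ℂ)⁻¹ • ((1 : Matrix (Fin 3 × Fin 3) (Fin 3 × Fin 3) ℂ)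
    - ∑ i : Fin 5, Matrix.vecMulVec (tiles i) (star (tiles i)))


lemma s2 : ((Real.sqrt 2 : ℝ) : ℂ)⁻¹ * ((Real.sqrt 2 : ℝ) : ℂ)⁻¹ = 2⁻¹ := by
  rw [← mul_inv, ← Complex.ofReal_mul, Real.mul_self_sqrt (by norm_num)]; norm_num

/-- tiles entries are real. -/
lemma tiles_real (i : Fin 5) (p : Fin 3 × Fin 3) : star (tiles i p) = tiles i p := by
  obtain ⟨a, b⟩ := p
  fin_cases i <;> fin_cases a <;> fin_cases b <;>
    simp [tiles, tp, e, Pi.single_apply, Complex.star_def, Complex.conj_ofReal]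

/-- product structure: swapping second indices. -/
lemma tiles_swap (i : Fin 5) (p q : Fin 3 × Fin 3) :
    tiles i (p.1, q.2) * tiles i (q.1, p.2) = tiles i p * tiles i q := by
  fin_cases i <;> simp [tiles, tp] <;> ring

lemma pt_fix : partialTranspose rhoUpb = rhoUpb := by
  ext p q
  simp only [partialTranspose, rhoUpb, Matrix.of_apply, Matrix.smul_apply, Matrix.sub_apply,
    Matrix.one_apply, Matrix.sum_apply, Matrix.vecMulVec_apply, Pi.star_apply, tiles_real]
  congr 2
  · exact if_congr (by aesop (add simp Prod.ext_iff)) rfl rfl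
  · exact Finset.sum_congr rfl fun i _ => tiles_swap i p q

lemma vmv_mul (a b c d : Fin 3 × Fin 3 → ℂ) :
    vecMulVec a b * vecMulVec c d = (b ⬝ᵥ c) • vecMulVec a d := by
  ext p q
  simp only [Matrix.mul_apply, vecMulVec_apply, Matrix.smul_apply, dotProduct, smul_eq_mul,
    Finset.sum_mul]
  exact Finset.sum_congr rfl fun k _ => by ring

lemma tiles_ortho (i j : Fin 5) :
    (star (tiles i)) ⬝ᵥ tiles j = if i = j then 1 else 0 := by
  fin_cases i <;> fin_cases j <;>
    simp [dotProduct, Fintype.sum_prod_type, Fin.sum_univ_three, tiles, tp, e,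
      Pi.single_apply, Complex.star_def, Complex.conj_ofReal] <;>
    norm_num [s2]

noncomputable def P : Matrix (Fin 3 × Fin 3) (Fin 3 × Fin 3) ℂ :=
  ∑ i : Fin 5, Matrix.vecMulVec (tiles i) (star (tiles i))

lemma P_idem : P * P = P := by
  simp only [P, Finset.sum_mul, Finset.mul_sum, vmv_mul, tiles_ortho, ite_smul, one_smul,
    zero_smul, Finset.sum_ite_eq, Finset.sum_ite_eq', Finset.mem_univ, if_true]

lemma P_herm : Pᴴ = P := by
  simp only [P, conjTranspose_sum]
  refine Finset.sum_congr rfl fun i _ => ?_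
  ext p q
  simp [conjTranspose_apply, vecMulVec_apply, mul_comm]

/-- the TILES state is PPT. -/
theorem rhoUpb_ppt : (partialTranspose rhoUpb).PosSemidef := by
  rw [pt_fix]
  have hr : rhoUpb = ((2:ℂ)⁻¹ • (1 - P))ᴴ * ((2:ℂ)⁻¹ • (1 - P)) := by
    rw [conjTranspose_smul, Matrix.smul_mul, Matrix.mul_smul, smul_smul]
    have h1 : (1 - P)ᴴ = 1 - P := by
      rw [conjTranspose_sub, conjTranspose_one, P_herm]
    rw [h1]
    have h2 : (1 - P) * (1 - P) = 1 - P := by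
      rw [Matrix.sub_mul, Matrix.mul_sub, Matrix.mul_sub, P_idem, Matrix.one_mul,
        Matrix.mul_one, Matrix.one_mul]
      abel
    rw [h2]
    show rhoUpb = (star (2:ℂ)⁻¹ * 2⁻¹) • (1 - P)
    rw [rhoUpb]
    show (4:ℂ)⁻¹ • (1 - P) = _
    norm_num [Complex.star_def]
  rw [hr]
  exact posSemidef_conjTranspose_mul_self _
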